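/- arXiv:1004.1086 — 5 statements merged into one kernel-verified Lean document; each statement's English description precedes it below -/
import Mathlib

section
/- Let N ≥ M ≥ 1 and let (e_i)_{i=1}^N be a unit-norm frame for ℝ^M (i.e., ‖e_i‖ = 1 for all i and the e_i span ℝ^M). Then the maximal frame correlation satisfies max_{1 ≤ i < j ≤ N} |⟨e_i, e_j⟩| ≥ √((N − M)/(M(N − 1))). -/
open scoped InnerProductSpace

lemma welch_swap4 {ι κ α β : Type*} [Fintype ι] [Fintype κ] [Fintype α] [Fintype β]
    (f : ι → κ → α → β → ℝ) :
    ∑ i, ∑ j, ∑ a, ∑ b, f i j a b = ∑ a, ∑ b, ∑ i, ∑ j, f i j a b := by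
  calc ∑ i, ∑ j, ∑ a, ∑ b, f i j a b
      = ∑ i, ∑ a, ∑ j, ∑ b, f i j a b := Finset.sum_congr rfl fun i _ => Finset.sum_comm
    _ = ∑ a, ∑ i, ∑ j, ∑ b, f i j a b := Finset.sum_comm
    _ = ∑ a, ∑ i, ∑ b, ∑ j, f i j a b :=
        Finset.sum_congr rfl fun a _ => Finset.sum_congr rfl fun i _ => Finset.sum_comm
    _ = ∑ a, ∑ b, ∑ i, ∑ j, f i j a b := Finset.sum_congr rfl fun a _ => Finset.sum_comm

lemma welch_keysum (N M : ℕ) (x : Fin N → Fin M → ℝ) :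
    ∑ i, ∑ j, (∑ a, x i a * x j a)^2 = ∑ a, ∑ b, (∑ i, x i a * x i b)^2 := by
  calc ∑ i, ∑ j, (∑ a, x i a * x j a)^2
      = ∑ i, ∑ j, ∑ a, ∑ b, (x i a * x j a) * (x i b * x j b) := by
        simp only [sq]; exact Finset.sum_congr rfl fun i _ => Finset.sum_congr rfl fun j _ =>
          Finset.sum_mul_sum _ _ _ _
    _ = ∑ a, ∑ b, ∑ i, ∑ j, (x i a * x j a) * (x i b * x j b) := welch_swap4 _
    _ = ∑ a, ∑ b, (∑ i, x i a * x i b)^2 := by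
        refine Finset.sum_congr rfl fun a _ => Finset.sum_congr rfl fun b _ => ?_
        rw [sq, Finset.sum_mul_sum]
        exact Finset.sum_congr rfl fun i _ => Finset.sum_congr rfl fun j _ => by ring

/-- Welch bound: a unit-norm frame of `N` vectors in `ℝ^M` has maximal frame
correlation at least `√((N − M)/(M(N − 1)))`. -/
theorem stmt_1 (M N : ℕ) (hM : 1 ≤ M) (hMN : M ≤ N)
    (e : Fin N → EuclideanSpace ℝ (Fin M))
    (hnorm : ∀ i, ‖e i‖ = 1)
    (hspan : Submodule.span ℝ (Set.range e) = ⊤) :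
    Real.sqrt (((N : ℝ) - M) / (M * ((N : ℝ) - 1))) ≤
      ⨆ i : Fin N, ⨆ j : Fin N, ⨆ (_ : i < j), |(⟪e i, e j⟫_ℝ)| := by
  classical
  set c : ℝ := ⨆ i : Fin N, ⨆ j : Fin N, ⨆ (_ : i < j), |(⟪e i, e j⟫_ℝ)| with hc
  have hNpos : 0 < N := lt_of_lt_of_le hM hMN
  haveI : Nonempty (Fin N) := ⟨⟨0, hNpos⟩⟩
  have hcnonneg : 0 ≤ c := by
    refine Real.iSup_nonneg fun i => Real.iSup_nonneg fun j => Real.iSup_nonneg fun _ => abs_nonneg _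
  -- every off-diagonal correlation is ≤ c
  have hle : ∀ i j : Fin N, i < j → |(⟪e i, e j⟫_ℝ)| ≤ c := by
    intro i j hij
    have h1 : |(⟪e i, e j⟫_ℝ)| = ⨆ (_ : i < j), |(⟪e i, e j⟫_ℝ)| := (ciSup_pos (f := fun _ => |(⟪e i, e j⟫_ℝ)|) hij).symm
    rw [h1]
    have h2 : (⨆ (_ : i < j), |(⟪e i, e j⟫_ℝ)|) ≤ ⨆ j : Fin N, ⨆ (_ : i < j), |(⟪e i, e j⟫_ℝ)| :=
      le_ciSup (f := fun j => ⨆ (_ : i < j), |(⟪e i, e j⟫_ℝ)|)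
        (Set.Finite.bddAbove (Set.finite_range _)) j
    exact h2.trans (le_ciSup (f := fun i => ⨆ j : Fin N, ⨆ (_ : i < j), |(⟪e i, e j⟫_ℝ)|)
      (Set.Finite.bddAbove (Set.finite_range _)) i)
  have hle' : ∀ i j : Fin N, i ≠ j → |(⟪e i, e j⟫_ℝ)| ≤ c := by
    intro i j hij
    rcases lt_or_gt_of_ne hij with h | h
    · exact hle i j h
    · rw [real_inner_comm]; exact hle j i h
  -- inner products in coordinates
  have hinner : ∀ i j : Fin N, (⟪e i, e j⟫_ℝ) = ∑ a, e i a * e j a := by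
    intro i j
    simp [PiLp.inner_apply, RCLike.inner_apply, mul_comm]
  have hself : ∀ i : Fin N, (⟪e i, e i⟫_ℝ) = 1 := by
    intro i
    rw [real_inner_self_eq_norm_sq, hnorm i]; norm_num
  set S : ℝ := ∑ i, ∑ j, (⟪e i, e j⟫_ℝ)^2 with hS
  -- lower bound: N^2 ≤ M * S
  have hlow : (N : ℝ)^2 ≤ (M : ℝ) * S := by
    have hSeq : S = ∑ a, ∑ b, (∑ i, e i a * e i b)^2 := by
      rw [hS]
      simp only [hinner]
      exact welch_keysum N M (fun i a => e i a)
    have htr : ∑ a : Fin M, (∑ i, e i a * e i a) = (N : ℝ) := by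
      rw [Finset.sum_comm]
      have : ∀ i : Fin N, ∑ a : Fin M, e i a * e i a = 1 := by
        intro i
        rw [← hinner i i, hself i]
      simp [this]
    have hcs : ((N : ℝ))^2 ≤ (M : ℝ) * ∑ a : Fin M, (∑ i, e i a * e i a)^2 := by
      have := sq_sum_le_card_mul_sum_sq (s := (Finset.univ : Finset (Fin M)))
        (f := fun a => ∑ i, e i a * e i a)
      simpa [htr] using this
    have hdiag : ∑ a : Fin M, (∑ i, e i a * e i a)^2 ≤ ∑ a, ∑ b, (∑ i, e i a * e i b)^2 := by
      refine Finset.sum_le_sum fun a _ => ?_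
      exact Finset.single_le_sum (f := fun b => (∑ i, e i a * e i b)^2)
        (fun b _ => sq_nonneg _) (Finset.mem_univ a)
    calc ((N : ℝ))^2 ≤ (M : ℝ) * ∑ a : Fin M, (∑ i, e i a * e i a)^2 := hcs
      _ ≤ (M : ℝ) * ∑ a, ∑ b, (∑ i, e i a * e i b)^2 :=
          mul_le_mul_of_nonneg_left hdiag (by positivity)
      _ = (M : ℝ) * S := by rw [hSeq]
  -- upper bound: S ≤ N * (1 + (N-1) * c^2)
  have hup : S ≤ (N : ℝ) * (1 + ((N : ℝ) - 1) * c^2) := by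
    rw [hS]
    have hbound : ∀ i : Fin N, (∑ j, (⟪e i, e j⟫_ℝ)^2) ≤ 1 + ((N : ℝ) - 1) * c^2 := by
      intro i
      rw [← Finset.add_sum_erase _ _ (Finset.mem_univ i), hself i]
      have : ∑ j ∈ Finset.univ.erase i, (⟪e i, e j⟫_ℝ)^2 ≤ ((N : ℝ) - 1) * c^2 := by
        have hcard : ((Finset.univ.erase i).card : ℝ) = (N : ℝ) - 1 := by
          rw [Finset.card_erase_of_mem (Finset.mem_univ i)]
          simp [Nat.cast_sub (Nat.one_le_iff_ne_zero.mpr hNpos.ne')]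
        calc ∑ j ∈ Finset.univ.erase i, (⟪e i, e j⟫_ℝ)^2
            ≤ ∑ _j ∈ Finset.univ.erase i, c^2 := by
              refine Finset.sum_le_sum fun j hj => ?_
              have hne : i ≠ j := (Finset.ne_of_mem_erase hj).symm
              have := hle' i j hne
              calc (⟪e i, e j⟫_ℝ)^2 = |(⟪e i, e j⟫_ℝ)|^2 := (sq_abs _).symm
                _ ≤ c^2 := by nlinarith [abs_nonneg (⟪e i, e j⟫_ℝ)]
          _ = ((N : ℝ) - 1) * c^2 := by rw [Finset.sum_const, nsmul_eq_mul, hcard]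
      simp only [one_pow]
      linarith
    calc ∑ i, ∑ j, (⟪e i, e j⟫_ℝ)^2 ≤ ∑ _i : Fin N, (1 + ((N : ℝ) - 1) * c^2) :=
          Finset.sum_le_sum fun i _ => hbound i
      _ = (N : ℝ) * (1 + ((N : ℝ) - 1) * c^2) := by
          rw [Finset.sum_const, nsmul_eq_mul]; simp
  -- combine
  rcases eq_or_lt_of_le hMN with hMeq | hMlt
  · have : ((N : ℝ) - M) = 0 := by rw [hMeq]; ring
    rw [this, zero_div, Real.sqrt_zero]
    exact hcnonneg
  · have hN2 : 2 ≤ N := lt_of_le_of_lt hM hMlt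
    have hNR : (1 : ℝ) ≤ (N : ℝ) - 1 := by
      have : (2 : ℝ) ≤ (N : ℝ) := by exact_mod_cast hN2
      linarith
    have hMR : (1 : ℝ) ≤ (M : ℝ) := by exact_mod_cast hM
    have hMNR : (M : ℝ) < (N : ℝ) := by exact_mod_cast hMlt
    have hdenom : 0 < (M : ℝ) * ((N : ℝ) - 1) := by nlinarith
    have hkey : ((N : ℝ) - M) / ((M : ℝ) * ((N : ℝ) - 1)) ≤ c^2 := by
      rw [div_le_iff₀ hdenom]
      have hNR0 : (0 : ℝ) < N := by exact_mod_cast hNpos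
      nlinarith [hlow, hup, hcnonneg]
    calc Real.sqrt (((N : ℝ) - M) / (M * ((N : ℝ) - 1)))
        ≤ Real.sqrt (c^2) := Real.sqrt_le_sqrt hkey
      _ = c := Real.sqrt_sq hcnonneg
end

section
/- Let N ≥ M ≥ 1 and let (e_i)_{i=1}^N be a unit-norm frame for ℝ^M such that max_{1 ≤ i < j ≤ N} |⟨e_i, e_j⟩| = √((N − M)/(M(N − 1))). Then (e_i) is an equiangular tight frame: there is a constant α with |⟨e_i, e_j⟩| = α for all i ≠ j, and there is a constant A with ∑_{i=1}^N ⟨x, e_i⟩ e_i = A x for all x ∈ ℝ^M. -/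
/-! For unit vectors `e₁, …, e_N` in a `d`-dimensional space, the frame potential
`∑ᵢⱼ ⟪eᵢ, eⱼ⟫²` equals `N² / d` plus the squared Hilbert–Schmidt distance of the frame operator
`S = ∑ᵢ ⟪·, eᵢ⟫ eᵢ` to `(N / d) • id`; so it is at least `N² / d`, with equality exactly for tight
frames. On the other hand it is `N` plus `N (N - 1)` off-diagonal terms, each at most the squared
maximal correlation. When the maximal correlation is the Welch bound `√((N - d) / (d (N - 1)))`
these two bounds coincide, which forces every off-diagonal term to equal the bound and
`S = (N / d) • id`. -/

open scoped InnerProductSpace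
open Finset Module

namespace Frame

variable {ι κ E : Type*} [Fintype ι] [NormedAddCommGroup E] [InnerProductSpace ℝ E]

noncomputable def frameOperator (e : ι → E) : E →ₗ[ℝ] E :=
  ∑ i, (innerₛₗ ℝ (e i)).smulRight (e i)

theorem frameOperator_apply (e : ι → E) (x : E) :
    frameOperator e x = ∑ i, ⟪x, e i⟫_ℝ • e i := by
  simp [frameOperator, real_inner_comm]

def framePotential (e : ι → E) : ℝ := ∑ i, ∑ j, ⟪e i, e j⟫_ℝ ^ 2

variable [Fintype κ] (b : OrthonormalBasis κ ℝ E) (e : ι → E)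

theorem sum_inner_frameOperator_self :
    ∑ a, ⟪frameOperator e (b a), b a⟫_ℝ = ∑ i, ‖e i‖ ^ 2 := by
  simp_rw [frameOperator_apply, sum_inner, real_inner_smul_left]
  rw [sum_comm]
  refine sum_congr rfl fun i _ => ?_
  rw [← real_inner_self_eq_norm_sq, ← b.sum_inner_mul_inner]
  simp [real_inner_comm]

theorem sum_norm_frameOperator_sq :
    ∑ a, ‖frameOperator e (b a)‖ ^ 2 = framePotential e := by
  simp_rw [← real_inner_self_eq_norm_sq, frameOperator_apply, sum_inner, inner_sum,
    real_inner_smul_left, real_inner_smul_right, framePotential, sq]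
  rw [sum_comm]
  refine sum_congr rfl fun i _ => ?_
  rw [sum_comm]
  refine sum_congr rfl fun j _ => ?_
  rw [← b.sum_inner_mul_inner (e i) (e j), sum_mul]
  simp_rw [real_inner_comm (b _) (e i), mul_assoc]

theorem sum_norm_frameOperator_sub_smul_sq (c : ℝ) :
    ∑ a, ‖frameOperator e (b a) - c • b a‖ ^ 2 =
      framePotential e - 2 * c * ∑ i, ‖e i‖ ^ 2 + c ^ 2 * Fintype.card κ := by
  simp_rw [norm_sub_sq_real, real_inner_smul_right, norm_smul, b.orthonormal.1, mul_one,
    Real.norm_eq_abs, sq_abs, sum_add_distrib, sum_sub_distrib, sum_norm_frameOperator_sq]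
  rw [← mul_sum, ← mul_sum, sum_inner_frameOperator_self, sum_const, card_univ, nsmul_eq_mul]
  ring

variable {e}

theorem framePotential_eq_card_add_sum_offDiag [DecidableEq ι] (hnorm : ∀ i, ‖e i‖ = 1) :
    framePotential e = Fintype.card ι + ∑ p ∈ univ.offDiag, ⟪e p.1, e p.2⟫_ℝ ^ 2 := by
  rw [framePotential, ← sum_product', ← diag_union_offDiag,
    sum_union (disjoint_diag_offDiag _), sum_diag]
  simp [hnorm]

theorem sq_inner_le_of_iSup_abs_inner_le [LinearOrder ι] {r : ℝ} (hr : 0 ≤ r)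
    (h : (⨆ i, ⨆ j, ⨆ (_ : i < j), |⟪e i, e j⟫_ℝ|) ≤ √r) {i j : ι} (hij : i ≠ j) :
    ⟪e i, e j⟫_ℝ ^ 2 ≤ r := by
  wlog hlt : i < j generalizing i j
  · rw [real_inner_comm]; exact this hij.symm (hij.lt_or_gt.resolve_left hlt)
  have hle : |⟪e i, e j⟫_ℝ| ≤ ⨆ i, ⨆ j, ⨆ (_ : i < j), |⟪e i, e j⟫_ℝ| :=
    le_ciSup_of_le (Set.finite_range _).bddAbove i <|
      le_ciSup_of_le (Set.finite_range _).bddAbove j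
        (ciSup_pos (f := fun _ => |⟪e i, e j⟫_ℝ|) hlt).ge
  rw [← sq_abs]
  exact (Real.le_sqrt (abs_nonneg _) hr).1 (hle.trans h)

variable [FiniteDimensional ℝ E]

theorem framePotential_sub_sq_card_div_finrank (hE : finrank ℝ E ≠ 0) (hnorm : ∀ i, ‖e i‖ = 1) :
    framePotential e - (Fintype.card ι : ℝ) ^ 2 / finrank ℝ E =
      ∑ a, ‖frameOperator e (stdOrthonormalBasis ℝ E a) -
        ((Fintype.card ι : ℝ) / finrank ℝ E) • stdOrthonormalBasis ℝ E a‖ ^ 2 := by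
  rw [sum_norm_frameOperator_sub_smul_sq]
  simp only [hnorm, one_pow, sum_const, card_univ, nsmul_eq_mul, mul_one, Fintype.card_fin]
  field_simp
  ring

theorem sq_card_div_finrank_le_framePotential (hE : finrank ℝ E ≠ 0) (hnorm : ∀ i, ‖e i‖ = 1) :
    (Fintype.card ι : ℝ) ^ 2 / finrank ℝ E ≤ framePotential e :=
  sub_nonneg.1 <| (framePotential_sub_sq_card_div_finrank hE hnorm).symm ▸
    sum_nonneg fun _ _ => sq_nonneg _

theorem frameOperator_eq_smul_of_framePotential_eq (hE : finrank ℝ E ≠ 0)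
    (hnorm : ∀ i, ‖e i‖ = 1)
    (h : framePotential e = (Fintype.card ι : ℝ) ^ 2 / finrank ℝ E) :
    frameOperator e = ((Fintype.card ι : ℝ) / finrank ℝ E) • LinearMap.id := by
  have hzero := framePotential_sub_sq_card_div_finrank hE hnorm
  rw [h, sub_self, eq_comm, sum_eq_zero_iff_of_nonneg fun _ _ => sq_nonneg _] at hzero
  refine (stdOrthonormalBasis ℝ E).toBasis.ext fun a => ?_
  simpa [sub_eq_zero] using hzero a (mem_univ a)

end Frame

theorem sq_div_sub_self_eq_mul_welch {M N : ℕ} (hM : 1 ≤ M) (hMN : M ≤ N) :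
    (N : ℝ) ^ 2 / M - N = (N * N - N) * (((N : ℝ) - M) / (M * ((N : ℝ) - 1))) := by
  rcases (hM.trans hMN).eq_or_lt with hN | hN
  · obtain rfl : M = 1 := by omega
    simp [← hN]
  · have hN' : (1 : ℝ) < N := by exact_mod_cast hN
    field_simp [(sub_pos.2 hN').ne']

open Frame

theorem stmt_2_general (M N : ℕ) (hM : 1 ≤ M) (hMN : M ≤ N)
    (e : Fin N → EuclideanSpace ℝ (Fin M))
    (hnorm : ∀ i, ‖e i‖ = 1)
    (heq : (⨆ i : Fin N, ⨆ j : Fin N, ⨆ (_ : i < j), |(⟪e i, e j⟫_ℝ)|) =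
      Real.sqrt (((N : ℝ) - M) / (M * ((N : ℝ) - 1)))) :
    (∃ α : ℝ, ∀ i j : Fin N, i ≠ j → |(⟪e i, e j⟫_ℝ)| = α) ∧
      (∃ A : ℝ, ∀ x : EuclideanSpace ℝ (Fin M),
        (∑ i : Fin N, ⟪x, e i⟫_ℝ • e i) = A • x) := by
  set r : ℝ := ((N : ℝ) - M) / (M * ((N : ℝ) - 1))
  have hr : 0 ≤ r := div_nonneg (sub_nonneg.2 (by exact_mod_cast hMN))
    (mul_nonneg (Nat.cast_nonneg _) (sub_nonneg.2 (by exact_mod_cast hM.trans hMN)))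
  have hoff : ∀ p ∈ univ.offDiag, ⟪e p.1, e p.2⟫_ℝ ^ 2 ≤ r := fun p hp =>
    sq_inner_le_of_iSup_abs_inner_le hr heq.le (mem_offDiag.1 hp).2.2
  have hfinrank : finrank ℝ (EuclideanSpace ℝ (Fin M)) = M := finrank_euclideanSpace_fin
  have hE : finrank ℝ (EuclideanSpace ℝ (Fin M)) ≠ 0 := by omega
  have hlower := sq_card_div_finrank_le_framePotential hE hnorm
  have hsplit := framePotential_eq_card_add_sum_offDiag hnorm
  have hcount : ∑ _p ∈ (univ : Finset (Fin N)).offDiag, r = (N : ℝ) ^ 2 / M - N := by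
    rw [sum_const, offDiag_card, card_univ, Fintype.card_fin, nsmul_eq_mul,
      Nat.cast_sub (Nat.le_mul_self N), Nat.cast_mul, sq_div_sub_self_eq_mul_welch hM hMN]
  rw [hfinrank, Fintype.card_fin] at hlower
  rw [Fintype.card_fin] at hsplit
  have hsum : ∑ p ∈ univ.offDiag, ⟪e p.1, e p.2⟫_ℝ ^ 2 = ∑ _p ∈ univ.offDiag, r :=
    le_antisymm (sum_le_sum hoff) (by linarith)
  refine ⟨⟨√r, fun i j hij => ?_⟩, ⟨N / M, fun x => ?_⟩⟩
  · rw [← Real.sqrt_sq_eq_abs, (sum_eq_sum_iff_of_le hoff).1 hsum (i, j) (by simpa using hij)]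
  · have htight := frameOperator_eq_smul_of_framePotential_eq hE hnorm
      (by rw [hfinrank, Fintype.card_fin]; linarith)
    simpa [frameOperator_apply, hfinrank] using LinearMap.congr_fun htight x

/-- A unit-norm frame attaining equality in the Welch bound is an equiangular
tight frame. -/
theorem stmt_2 (M N : ℕ) (hM : 1 ≤ M) (hMN : M ≤ N)
    (e : Fin N → EuclideanSpace ℝ (Fin M))
    (hnorm : ∀ i, ‖e i‖ = 1)
    (hspan : Submodule.span ℝ (Set.range e) = ⊤)
    (heq : (⨆ i : Fin N, ⨆ j : Fin N, ⨆ (_ : i < j), |(⟪e i, e j⟫_ℝ)|) =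
      Real.sqrt (((N : ℝ) - M) / (M * ((N : ℝ) - 1)))) :
    (∃ α : ℝ, ∀ i j : Fin N, i ≠ j → |(⟪e i, e j⟫_ℝ)| = α) ∧
      (∃ A : ℝ, ∀ x : EuclideanSpace ℝ (Fin M),
        (∑ i : Fin N, ⟪x, e i⟫_ℝ • e i) = A • x) :=
  stmt_2_general M N hM hMN e hnorm heq
end

section
/- Let N ≥ M ≥ 1 and let (u_i)_{i=1}^N be an equiangular tight unit-norm frame for ℝ^M. Then (u_i) is a Grassmannian frame: for every unit-norm frame (e_i)_{i=1}^N for ℝ^M, one has max_{1 ≤ i < j ≤ N} |⟨u_i, u_j⟩| ≤ max_{1 ≤ i < j ≤ N} |⟨e_i, e_j⟩|. -/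
/-!
For a family `e` of `N` unit vectors in an `M`-dimensional space, write `G` for the matrix of
its frame operator `S x = ∑ ⟪x, eᵢ⟫ eᵢ` in an orthonormal basis. Then the frame potential
`∑ᵢⱼ ⟪eᵢ, eⱼ⟫²` equals `∑ₖₗ Gₖₗ²` and `tr G = N`, so by Cauchy–Schwarz on the diagonal it is
at least `N² / M` (the Welch bound), with equality for tight frames (`G = A • 1`). On the other
hand the frame potential is at most `N + N (N - 1) β²` when all correlations are bounded by `β`,
with equality for an equiangular frame with angle `β`. Comparing an equiangular tight frame
with an arbitrary unit-norm frame therefore bounds the common correlation of the former by the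
maximal correlation of the latter.
-/

open scoped InnerProductSpace
open Finset

section Potential

variable {E : Type*} [NormedAddCommGroup E] [InnerProductSpace ℝ E] {ι κ : Type*} [Fintype ι]
  [Fintype κ]

def frameOperator (e : ι → E) (x : E) : E := ∑ i, ⟪x, e i⟫_ℝ • e i

def framePotential (e : ι → E) : ℝ := ∑ i, ∑ j, ⟪e i, e j⟫_ℝ ^ 2

lemma inner_frameOperator (e : ι → E) (x y : E) :
    ⟪x, frameOperator e y⟫_ℝ = ∑ i, ⟪x, e i⟫_ℝ * ⟪y, e i⟫_ℝ := by
  simp only [frameOperator, inner_sum, real_inner_smul_right, mul_comm]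

lemma framePotential_eq_sum_sq_inner_frameOperator (e : ι → E) (b : OrthonormalBasis κ ℝ E) :
    framePotential e = ∑ k, ∑ l, ⟪b k, frameOperator e (b l)⟫_ℝ ^ 2 := by
  have h : ∀ i j, ⟪e i, e j⟫_ℝ ^ 2 = ∑ k, ∑ l, (⟪b k, e i⟫_ℝ * ⟪b l, e i⟫_ℝ) *
      (⟪b k, e j⟫_ℝ * ⟪b l, e j⟫_ℝ) := by
    intro i j
    rw [← b.sum_inner_mul_inner, sq, sum_mul_sum]
    refine sum_congr rfl fun k _ => sum_congr rfl fun l _ => ?_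
    simp only [real_inner_comm (e i)]
    ring
  simp only [framePotential, h, inner_frameOperator, sq, sum_mul_sum]
  simp_rw [sum_comm (s := (univ : Finset ι)) (t := (univ : Finset κ))]

lemma sum_inner_frameOperator_self (e : ι → E) (b : OrthonormalBasis κ ℝ E) :
    ∑ k, ⟪b k, frameOperator e (b k)⟫_ℝ = ∑ i, ‖e i‖ ^ 2 := by
  simp only [inner_frameOperator, ← sq, ← b.sum_sq_inner_right]
  exact sum_comm

lemma sq_sum_norm_sq_le_finrank_mul_framePotential [FiniteDimensional ℝ E] (e : ι → E) :
    (∑ i, ‖e i‖ ^ 2) ^ 2 ≤ Module.finrank ℝ E * framePotential e := by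
  set b := stdOrthonormalBasis ℝ E
  set G : Fin (Module.finrank ℝ E) → Fin (Module.finrank ℝ E) → ℝ :=
    fun k l => ⟪b k, frameOperator e (b l)⟫_ℝ
  calc (∑ i, ‖e i‖ ^ 2) ^ 2 = (∑ k, G k k) ^ 2 := by rw [sum_inner_frameOperator_self]
    _ ≤ Module.finrank ℝ E * ∑ k, G k k ^ 2 := by
      simpa using sq_sum_le_card_mul_sum_sq (s := univ) (f := fun k => G k k)
    _ ≤ Module.finrank ℝ E * ∑ k, ∑ l, G k l ^ 2 := by
      gcongr with k
      exact single_le_sum (f := fun l => G k l ^ 2) (fun _ _ => sq_nonneg _) (mem_univ k)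
    _ = Module.finrank ℝ E * framePotential e := by
      rw [framePotential_eq_sum_sq_inner_frameOperator e b]

lemma finrank_mul_framePotential_of_tight [FiniteDimensional ℝ E] {u : ι → E} {A : ℝ}
    (hA : ∀ x, frameOperator u x = A • x) :
    Module.finrank ℝ E * framePotential u = (∑ i, ‖u i‖ ^ 2) ^ 2 := by
  set b := stdOrthonormalBasis ℝ E
  have hG : ∀ k l, ⟪b k, frameOperator u (b l)⟫_ℝ = if k = l then A else 0 := by
    intro k l
    rw [hA, real_inner_smul_right, orthonormal_iff_ite.mp b.orthonormal, mul_ite, mul_one,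
      mul_zero]
  rw [← sum_inner_frameOperator_self u b, framePotential_eq_sum_sq_inner_frameOperator u b]
  simp [hG]
  ring

lemma framePotential_le_of_tight [FiniteDimensional ℝ E] (hE : 0 < Module.finrank ℝ E)
    {ι' : Type*} [Fintype ι'] {u : ι → E} {A : ℝ} (hA : ∀ x, frameOperator u x = A • x)
    {e : ι' → E} (he : ∑ i, ‖e i‖ ^ 2 = ∑ i, ‖u i‖ ^ 2) :
    framePotential u ≤ framePotential e := by
  have h := sq_sum_norm_sq_le_finrank_mul_framePotential e
  rw [he, ← finrank_mul_framePotential_of_tight hA] at h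
  exact le_of_mul_le_mul_left h (by exact_mod_cast hE)

lemma sum_sum_erase_const [DecidableEq ι] (c : ℝ) :
    ∑ i : ι, ∑ _j ∈ univ.erase i, c = Fintype.card ι * (Fintype.card ι - 1) * c := by
  rcases isEmpty_or_nonempty ι with h | h
  · simp
  · simp [card_erase_of_mem, Nat.cast_sub Fintype.card_pos, mul_assoc]

lemma framePotential_eq_card_add_sum_erase [DecidableEq ι] {e : ι → E}
    (he : ∀ i, ‖e i‖ = 1) :
    framePotential e = Fintype.card ι + ∑ i, ∑ j ∈ univ.erase i, ⟪e i, e j⟫_ℝ ^ 2 := by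
  have hrow : ∀ i, ∑ j, ⟪e i, e j⟫_ℝ ^ 2 = 1 + ∑ j ∈ univ.erase i, ⟪e i, e j⟫_ℝ ^ 2 := by
    intro i
    rw [← add_sum_erase _ _ (mem_univ i), real_inner_self_eq_norm_sq, he i, one_pow, one_pow]
  rw [framePotential, sum_congr rfl fun i _ => hrow i, sum_add_distrib]
  simp

lemma framePotential_le_of_abs_inner_le {e : ι → E} (he : ∀ i, ‖e i‖ = 1) {β : ℝ}
    (hβ : ∀ i j, i ≠ j → |⟪e i, e j⟫_ℝ| ≤ β) :
    framePotential e ≤ Fintype.card ι + Fintype.card ι * (Fintype.card ι - 1) * β ^ 2 := by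
  classical
  rw [framePotential_eq_card_add_sum_erase he, ← sum_sum_erase_const, add_le_add_iff_left]
  refine sum_le_sum fun i _ => sum_le_sum fun j hj => ?_
  rw [← sq_abs]
  exact pow_le_pow_left₀ (abs_nonneg _) (hβ i j (ne_of_mem_erase hj).symm) 2

lemma framePotential_of_abs_inner_eq {e : ι → E} (he : ∀ i, ‖e i‖ = 1) {α : ℝ}
    (hα : ∀ i j, i ≠ j → |⟪e i, e j⟫_ℝ| = α) :
    framePotential e = Fintype.card ι + Fintype.card ι * (Fintype.card ι - 1) * α ^ 2 := by
  classical
  rw [framePotential_eq_card_add_sum_erase he, ← sum_sum_erase_const]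
  refine congrArg _ (sum_congr rfl fun i _ => sum_congr rfl fun j hj => ?_)
  rw [← sq_abs, hα i j (ne_of_mem_erase hj).symm]

end Potential

section Correlation

variable {E : Type*} [NormedAddCommGroup E] [InnerProductSpace ℝ E] {ι : Type*} [LinearOrder ι]

noncomputable def maxCorrelation (e : ι → E) : ℝ := ⨆ i, ⨆ j, ⨆ (_ : i < j), |⟪e i, e j⟫_ℝ|

lemma abs_inner_le_maxCorrelation [Finite ι] (e : ι → E) {i j : ι} (hij : i ≠ j) :
    |⟪e i, e j⟫_ℝ| ≤ maxCorrelation e := by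
  wlog h : i < j generalizing i j
  · rw [real_inner_comm]
    exact this hij.symm (hij.lt_or_gt.resolve_left h)
  refine le_ciSup_of_le (Set.finite_range _).bddAbove i ?_
  refine le_ciSup_of_le (Set.finite_range _).bddAbove j ?_
  exact (ciSup_pos (f := fun _ => |⟪e i, e j⟫_ℝ|) h).ge

lemma maxCorrelation_nonneg (e : ι → E) : 0 ≤ maxCorrelation e :=
  Real.iSup_nonneg fun _ => Real.iSup_nonneg fun _ => Real.iSup_nonneg fun _ => abs_nonneg _

lemma maxCorrelation_le {e : ι → E} {α : ℝ} (hα : 0 ≤ α)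
    (h : ∀ i j, i ≠ j → |⟪e i, e j⟫_ℝ| ≤ α) : maxCorrelation e ≤ α :=
  Real.iSup_le (fun i => Real.iSup_le (fun j => Real.iSup_le (fun hij => h i j hij.ne) hα) hα) hα

end Correlation

theorem stmt_4_general (M N : ℕ) (hM : 1 ≤ M)
    (u : Fin N → EuclideanSpace ℝ (Fin M))
    (hunorm : ∀ i, ‖u i‖ = 1)
    (hequi : ∃ α : ℝ, ∀ i j : Fin N, i ≠ j → |(⟪u i, u j⟫_ℝ)| = α)
    (htight : ∃ A : ℝ, ∀ x : EuclideanSpace ℝ (Fin M),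
      (∑ i : Fin N, ⟪x, u i⟫_ℝ • u i) = A • x) :
    ∀ e : Fin N → EuclideanSpace ℝ (Fin M),
      (∀ i, ‖e i‖ = 1) → Submodule.span ℝ (Set.range e) = ⊤ →
      (⨆ i : Fin N, ⨆ j : Fin N, ⨆ (_ : i < j), |(⟪u i, u j⟫_ℝ)|) ≤
        ⨆ i : Fin N, ⨆ j : Fin N, ⨆ (_ : i < j), |(⟪e i, e j⟫_ℝ)| := by
  intro e he _
  obtain ⟨α, hα⟩ := hequi
  obtain ⟨A, hA⟩ := htight
  refine maxCorrelation_le (maxCorrelation_nonneg e) fun i j hij => ?_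
  rw [hα i j hij]
  have hN : (1 : ℝ) < N := by
    simpa using Fintype.one_lt_card_iff_nontrivial.mpr ⟨i, j, hij⟩
  have hpot : framePotential u ≤ framePotential e :=
    framePotential_le_of_tight (by rwa [finrank_euclideanSpace_fin]) hA (by simp [he, hunorm])
  rw [framePotential_of_abs_inner_eq hunorm hα] at hpot
  have hsq : α ^ 2 ≤ maxCorrelation e ^ 2 := by
    have := hpot.trans (framePotential_le_of_abs_inner_le he
      fun _ _ h => abs_inner_le_maxCorrelation e h)
    simp only [Fintype.card_fin, add_le_add_iff_left] at this
    exact le_of_mul_le_mul_left this (by nlinarith)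
  exact (pow_le_pow_iff_left₀ ((abs_nonneg _).trans_eq (hα i j hij))
    (maxCorrelation_nonneg e) two_ne_zero).mp hsq

/-- An equiangular tight unit-norm frame is a Grassmannian frame: among all
unit-norm frames of `N` vectors in `ℝ^M` it minimizes the maximal frame
correlation. -/
theorem stmt_4 (M N : ℕ) (hM : 1 ≤ M) (hMN : M ≤ N)
    (u : Fin N → EuclideanSpace ℝ (Fin M))
    (hunorm : ∀ i, ‖u i‖ = 1)
    (huspan : Submodule.span ℝ (Set.range u) = ⊤)
    (hequi : ∃ α : ℝ, ∀ i j : Fin N, i ≠ j → |(⟪u i, u j⟫_ℝ)| = α)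
    (htight : ∃ A : ℝ, ∀ x : EuclideanSpace ℝ (Fin M),
      (∑ i : Fin N, ⟪x, u i⟫_ℝ • u i) = A • x) :
    ∀ e : Fin N → EuclideanSpace ℝ (Fin M),
      (∀ i, ‖e i‖ = 1) → Submodule.span ℝ (Set.range e) = ⊤ →
      (⨆ i : Fin N, ⨆ j : Fin N, ⨆ (_ : i < j), |(⟪u i, u j⟫_ℝ)|) ≤
        ⨆ i : Fin N, ⨆ j : Fin N, ⨆ (_ : i < j), |(⟪e i, e j⟫_ℝ)| :=
  stmt_4_general M N hM u hunorm hequi htight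
end

section
/- Let n ≥ 2 and let H be an n × n real matrix with entries in {±1}, satisfying H Hᵀ = n·I, whose first row (row index 0) consists solely of 1s. For 0 ≤ i ≤ n−1, define e_i = (1/√(n−1)) · (H(j,i))_{1 ≤ j ≤ n−1} ∈ ℝ^{n−1}. Then (e_i)_{i=0}^{n−1} is a tight frame for ℝ^{n−1} with frame bound n/(n−1): for every x ∈ ℝ^{n−1}, ∑_{i=0}^{n−1} ⟨x, e_i⟩ e_i = (n/(n−1)) x. -/
/-!
Deleting the first row of `H` leaves a matrix `A` with `A * Aᵀ = n • 1`, since the remaining rows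
are still pairwise orthogonal of squared length `n`. For any matrix, the frame operator
`x ↦ ∑ i, ⟪x, aᵢ⟫ aᵢ` of its columns `aᵢ` is `x ↦ A Aᵀ x`, so the columns of `A` form a tight frame
with bound `n`; scaling every vector by `1 / √(n - 1)` divides the bound by `n - 1`.
-/

open scoped InnerProductSpace Matrix

section TightFrame

variable {ι E : Type*} [Fintype ι] [NormedAddCommGroup E] [InnerProductSpace ℝ E]

def IsTightFrame (v : ι → E) (A : ℝ) : Prop :=
  ∀ x, ∑ i, ⟪x, v i⟫_ℝ • v i = A • x

theorem IsTightFrame.smul {v : ι → E} {A : ℝ} (hv : IsTightFrame v A) (s : ℝ) :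
    IsTightFrame (fun i => s • v i) (s ^ 2 * A) := by
  intro x
  calc ∑ i, ⟪x, s • v i⟫_ℝ • s • v i = s ^ 2 • ∑ i, ⟪x, v i⟫_ℝ • v i := by
        rw [Finset.smul_sum]
        refine Finset.sum_congr rfl fun i _ => ?_
        rw [real_inner_smul_right, smul_smul, smul_smul]
        ring_nf
    _ = (s ^ 2 * A) • x := by rw [hv x, smul_smul]

theorem isTightFrame_columns_of_mul_transpose_eq_smul_one {m : Type*} [Fintype m]
    [DecidableEq m] {A : Matrix m ι ℝ} {c : ℝ} (hA : A * Aᵀ = c • 1) :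
    IsTightFrame (fun i => WithLp.toLp 2 (Aᵀ i)) c := by
  intro x
  ext k
  have hrows : ∀ j, ∑ i, A j i * A k i = if j = k then c else 0 := fun j => by
    simpa [Matrix.mul_apply, Matrix.one_apply] using congrFun (congrFun hA j) k
  calc _ = ∑ j, x j * ∑ i, A j i * A k i := by
        simp only [WithLp.ofLp_sum, Finset.sum_apply, PiLp.smul_apply, smul_eq_mul,
          EuclideanSpace.inner_eq_star_dotProduct, dotProduct, star_trivial,
          Matrix.transpose_apply, Finset.sum_mul, Finset.mul_sum]
        rw [Finset.sum_comm]
        exact Finset.sum_congr rfl fun j _ => Finset.sum_congr rfl fun i _ => by ring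
    _ = (c • x) k := by
        simp only [hrows, mul_ite, mul_zero, Finset.sum_ite_eq', Finset.mem_univ, if_true,
          PiLp.smul_apply, smul_eq_mul]
        exact mul_comm _ _

end TightFrame

/-- The normalized truncated columns of a normalized `n × n` Hadamard matrix form
a tight frame for `ℝ^{n−1}` with frame bound `n/(n−1)`. -/
theorem stmt_6 (n : ℕ) (hn : 2 ≤ n) (H : Matrix (Fin n) (Fin n) ℝ)
    (hHad : H * H.transpose = (n : ℝ) • 1)
    (e : Fin n → EuclideanSpace ℝ (Fin (n - 1)))
    (he : ∀ i : Fin n, ∀ j : Fin (n - 1),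
      e i j = (1 / Real.sqrt ((n : ℝ) - 1)) * H ⟨j.val + 1, by omega⟩ i) :
    ∀ x : EuclideanSpace ℝ (Fin (n - 1)),
      (∑ i : Fin n, ⟪x, e i⟫_ℝ • e i) = ((n : ℝ) / ((n : ℝ) - 1)) • x := by
  let dropFirst : Fin (n - 1) → Fin n := fun j => ⟨j.val + 1, by omega⟩
  have hdrop : Function.Injective dropFirst := fun j k h => by
    simpa [dropFirst, Fin.ext_iff] using h
  set A := H.submatrix dropFirst id
  have hA : A * Aᵀ = (n : ℝ) • 1 := by
    rw [Matrix.transpose_submatrix, ← Matrix.submatrix_mul _ _ _ _ _ Function.bijective_id, hHad]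
    ext j k
    simp [Matrix.one_apply, hdrop.eq_iff]
  have he_eq : e = fun i => (1 / Real.sqrt ((n : ℝ) - 1)) • WithLp.toLp 2 (Aᵀ i) := by
    funext i; ext j; simp [he, A, dropFirst]
  have hpos : (0 : ℝ) ≤ (n : ℝ) - 1 := by
    have : (2 : ℝ) ≤ n := by exact_mod_cast hn
    linarith
  intro x
  rw [he_eq, (isTightFrame_columns_of_mul_transpose_eq_smul_one hA).smul _ x, div_pow,
    Real.sq_sqrt hpos, one_pow, one_div_mul_eq_div]
end

section
/- Let n > m ≥ 0, and for j, k ∈ {0, …, 2ⁿ − 1} define H(j,k) = (−1)^{b(j,k)}, where b(j,k) is the number of bit positions at which the binary expansions of j and k both have a 1. For each k, let v_k = (H(j,k))_{2^m ≤ j ≤ 2ⁿ−1} ∈ ℝ^{2ⁿ−2^m} be the k-th column with the first 2^m entries removed. Then for all k₁, k₂, ⟨v_{k₁}, v_{k₂}⟩ = 2ⁿ·δ_{k₁,k₂} − 2^m·[k₁ ≡ k₂ (mod 2^m)], where [·] is 1 if the condition holds and 0 otherwise. -/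
open scoped InnerProductSpace

/-- `bitOverlap j k` is the number of bit positions at which the binary
expansions of `j` and `k` both have a `1`. -/
def bitOverlap (j k : ℕ) : ℕ := (Nat.land j k).bits.count true

/-!
With `c = k₁ xor k₂`, the product of the entries of columns `k₁` and `k₂` in row `j` is
`(-1)^{b(j,c)}`, because `b(j,·)` turns xor into addition mod 2. Over a full block `j < 2^N`
these signs sum to `2^N` if `2^N ∣ c` and to `0` otherwise: pairing `2i` with `2i+1`, the pair
cancels when `c` is odd and reduces to the block `i < 2^(N-1)` for `c / 2` when `c` is even.
The truncated inner product is the sum over `j < 2ⁿ` minus the sum over `j < 2^m`.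
-/

open Finset

theorem count_true_bits_bit (b : Bool) (n : ℕ) :
    (Nat.bit b n).bits.count true = b.toNat + n.bits.count true := by
  rcases eq_or_ne n 0 with rfl | hn
  · cases b <;> simp [Nat.bit, Nat.one_bits]
  · rw [Nat.bits_append_bit n b (by simp [hn]), List.count_cons]
    cases b <;> simp [add_comm]

theorem bitOverlap_bit (a b : Bool) (m n : ℕ) :
    bitOverlap (Nat.bit a m) (Nat.bit b n) = (a && b).toNat + bitOverlap m n := by
  show (Nat.bit a m &&& Nat.bit b n).bits.count true = _
  rw [Nat.land_bit, count_true_bits_bit]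
  rfl

section Ring

variable {R : Type*}

theorem neg_one_pow_bitOverlap_xor [Monoid R] [HasDistribNeg R] (j k₁ k₂ : ℕ) :
    (-1 : R) ^ bitOverlap j (k₁ ^^^ k₂) = (-1) ^ bitOverlap j k₁ * (-1) ^ bitOverlap j k₂ := by
  induction j using Nat.binaryRec generalizing k₁ k₂ with
  | zero => simp [bitOverlap]
  | bit a j ih =>
    rw [← Nat.bit_bodd_div2 k₁, ← Nat.bit_bodd_div2 k₂, Nat.xor_bit, bitOverlap_bit,
      bitOverlap_bit, bitOverlap_bit, pow_add, pow_add, pow_add, ih,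
      ((Commute.neg_one_left _).pow_pow _ _).mul_mul_mul_comm]
    congr 1
    cases a <;> cases k₁.bodd <;> cases k₂.bodd <;> simp

theorem sum_range_two_mul [AddCommMonoid R] (f : ℕ → R) (n : ℕ) :
    ∑ j ∈ range (2 * n), f j = ∑ i ∈ range n, (f (2 * i) + f (2 * i + 1)) := by
  induction n with
  | zero => simp
  | succ n ih => rw [mul_add_one, sum_range_succ, sum_range_succ, sum_range_succ, ih, add_assoc]

theorem two_pow_succ_dvd_bit_iff (N : ℕ) (b : Bool) (n : ℕ) :
    2 ^ (N + 1) ∣ Nat.bit b n ↔ b = false ∧ 2 ^ N ∣ n := by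
  cases b
  · simp [pow_succ', Nat.mul_dvd_mul_iff_left]
  · simp only [reduceCtorEq, false_and, iff_false, pow_succ']
    intro h
    have := (dvd_mul_right 2 _).trans h
    simp [Nat.bit_val] at this

theorem sum_neg_one_pow_bitOverlap [Ring R] (N c : ℕ) :
    ∑ j ∈ range (2 ^ N), (-1 : R) ^ bitOverlap j c = if 2 ^ N ∣ c then 2 ^ N else 0 := by
  induction N generalizing c with
  | zero => simp [bitOverlap]
  | succ N ih =>
    obtain ⟨b, d, rfl⟩ : ∃ b d, Nat.bit b d = c := ⟨_, _, Nat.bit_bodd_div2 c⟩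
    have hpair (i : ℕ) : (-1 : R) ^ bitOverlap (2 * i) (Nat.bit b d)
        + (-1) ^ bitOverlap (2 * i + 1) (Nat.bit b d)
        = (1 + (-1) ^ b.toNat) * (-1) ^ bitOverlap i d := by
      show (-1 : R) ^ bitOverlap (Nat.bit false i) (Nat.bit b d)
        + (-1) ^ bitOverlap (Nat.bit true i) (Nat.bit b d) = _
      rw [bitOverlap_bit, bitOverlap_bit, pow_add, pow_add, add_mul]
      simp
    rw [pow_succ', sum_range_two_mul, sum_congr rfl fun i _ => hpair i, ← mul_sum, ih,
      ← pow_succ']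
    simp only [two_pow_succ_dvd_bit_iff]
    cases b <;> simp [one_add_one_eq_two, mul_ite, pow_succ']

theorem sum_neg_one_pow_bitOverlap_add_two_pow [Ring R] {m n : ℕ} (hmn : m ≤ n) (c : ℕ) :
    ∑ j ∈ range (2 ^ n - 2 ^ m), (-1 : R) ^ bitOverlap (j + 2 ^ m) c
      = (if 2 ^ n ∣ c then 2 ^ n else 0) - if 2 ^ m ∣ c then 2 ^ m else 0 := by
  have hle : 2 ^ m ≤ 2 ^ n := Nat.pow_le_pow_right two_pos hmn
  rw [← sum_neg_one_pow_bitOverlap, ← sum_neg_one_pow_bitOverlap, ← Nat.add_sub_cancel' hle,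
    sum_range_add_sub_sum_range, Nat.add_sub_cancel' hle]
  simp only [add_comm]

end Ring

theorem two_pow_dvd_xor_iff {a b m : ℕ} : 2 ^ m ∣ a ^^^ b ↔ a % 2 ^ m = b % 2 ^ m := by
  rw [Nat.dvd_iff_mod_eq_zero, Nat.xor_mod_two_pow, Nat.xor_eq_zero_iff]

/-- Inner products of the columns of the Sylvester matrix of order `2ⁿ` with
their first `2^m` entries removed:
`⟪v k₁, v k₂⟫ = 2ⁿ δ_{k₁ k₂} − 2^m [k₁ ≡ k₂ (mod 2^m)]`. -/
theorem stmt_10 (n m : ℕ) (hmn : m < n)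
    (v : Fin (2 ^ n) → EuclideanSpace ℝ (Fin (2 ^ n - 2 ^ m)))
    (hv : ∀ (k : Fin (2 ^ n)) (j : Fin (2 ^ n - 2 ^ m)),
      v k j = (-1 : ℝ) ^ bitOverlap (j.val + 2 ^ m) k.val) :
    ∀ k₁ k₂ : Fin (2 ^ n),
      ⟪v k₁, v k₂⟫_ℝ =
        (if k₁ = k₂ then (2 ^ n : ℝ) else 0) -
          (if k₁.val % 2 ^ m = k₂.val % 2 ^ m then (2 ^ m : ℝ) else 0) := by
  intro k₁ k₂
  have hinner : ⟪v k₁, v k₂⟫_ℝ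
      = ∑ j ∈ range (2 ^ n - 2 ^ m), (-1 : ℝ) ^ bitOverlap (j + 2 ^ m) (k₁ ^^^ k₂) := by
    rw [PiLp.inner_apply, ← Fin.sum_univ_eq_sum_range]
    refine sum_congr rfl fun j _ => ?_
    simp [hv, neg_one_pow_bitOverlap_xor, mul_comm]
  rw [hinner, sum_neg_one_pow_bitOverlap_add_two_pow hmn.le]
  simp only [two_pow_dvd_xor_iff, Nat.mod_eq_of_lt k₁.isLt, Nat.mod_eq_of_lt k₂.isLt, Fin.val_inj]
end
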